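/- arXiv:2101.08908 — 2 statements merged into one kernel-verified Lean document; each statement's English description precedes it below -/
import Mathlib

section
/- For every iteration index ν ≥ 0 and every d ∈ {0,…,N−1}, the estimated value function is unbounded in the age coordinate: V_ν(d,Δ) → +∞ as Δ → ∞. -/
/-!
Induction on `ν`. Both actions cost the age `Δ` plus (a nonnegative multiple of) the expected
continuation `S[V_ν](d, Δ)`, which is bounded below in `Δ`: its `d' = 0` term resets the age and is
constant, while every other term has a nonnegative weight and tends to `+∞` by induction. Hence
both actions, their minimum `Q_{ν+1}(d, ·)`, and its shift by the constant `Q_{ν+1}(0, 0)` tend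
to `+∞`.
-/

/-- Transition weights of the source mismatch chain:
`P d d = 1 - 2p` for `0 ≤ d ≤ N-1`; `P d (d±1) = p` for `1 ≤ d ≤ N-2`;
`P 0 1 = 2p`, `P (N-1) (N-2) = 2p`; all other entries `0`. -/
noncomputable def Pw (N : ℕ) (p : ℝ) (d d' : ℕ) : ℝ :=
  if d' = d then 1 - 2 * p
  else if d = 0 ∧ d' = 1 then 2 * p
  else if d = N - 1 ∧ d' = N - 2 then 2 * p
  else if 1 ≤ d ∧ d ≤ N - 2 ∧ (d' = d + 1 ∨ d' + 1 = d) then p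
  else 0

/-- `S[V](d,Δ) = Σ_{d'=0}^{N-1} P_{d,d'} · V(d', Δ'(d'))` where
`Δ'(d') = 0` if `d' = 0` and `Δ'(d') = Δ + d'` otherwise. -/
noncomputable def Ssum (N : ℕ) (p : ℝ) (V : ℕ × ℕ → ℝ) (d Δ : ℕ) : ℝ :=
  ∑ d' ∈ Finset.range N, Pw N p d d' * V (d', if d' = 0 then 0 else Δ + d')

/-- `V⁰_{ν+1}(d,Δ) = Δ + S[V_ν](d,Δ)` (value of idling). -/
noncomputable def Vact0 (N : ℕ) (p : ℝ) (V : ℕ × ℕ → ℝ) (d Δ : ℕ) : ℝ :=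
  (Δ : ℝ) + Ssum N p V d Δ

/-- `V¹_{ν+1}(d,Δ) = Δ + λ + p_s((1-2p)V_ν(0,0) + 2p V_ν(1,1)) + p_f S[V_ν](d,Δ)`
(value of transmitting), with `p_f = 1 - p_s`. -/
noncomputable def Vact1 (N : ℕ) (p ps lam : ℝ) (V : ℕ × ℕ → ℝ) (d Δ : ℕ) : ℝ :=
  (Δ : ℝ) + lam + ps * ((1 - 2 * p) * V (0, 0) + 2 * p * V (1, 1))
    + (1 - ps) * Ssum N p V d Δ

/-- Interim value `Q_{ν+1}(d,Δ) = min{V⁰_{ν+1}(d,Δ), V¹_{ν+1}(d,Δ)}`. -/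
noncomputable def Qit (N : ℕ) (p ps lam : ℝ) (V : ℕ × ℕ → ℝ) (d Δ : ℕ) : ℝ :=
  min (Vact0 N p V d Δ) (Vact1 N p ps lam V d Δ)

/-- The relative value iteration sequence:
`V_0(d,Δ) = Δ` and `V_{ν+1}(x) = Q_{ν+1}(x) - Q_{ν+1}(0,0)`. -/
noncomputable def Vit (N : ℕ) (p ps lam : ℝ) : ℕ → ℕ × ℕ → ℝ
  | 0 => fun x => (x.2 : ℝ)
  | ν + 1 => fun x =>
      Qit N p ps lam (Vit N p ps lam ν) x.1 x.2
        - Qit N p ps lam (Vit N p ps lam ν) 0 0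

/-- `δV_ν(d,Δ) = V¹_ν(d,Δ) - V⁰_ν(d,Δ)` (for `ν ≥ 1`, built from `V_{ν-1}`). -/
noncomputable def dV (N : ℕ) (p ps lam : ℝ) (ν : ℕ) (d Δ : ℕ) : ℝ :=
  Vact1 N p ps lam (Vit N p ps lam (ν - 1)) d Δ
    - Vact0 N p (Vit N p ps lam (ν - 1)) d Δ

open Filter

section ValueIteration

variable {N : ℕ} {p ps lam : ℝ}

lemma Pw_nonneg (hp0 : 0 ≤ p) (hp : p ≤ 1 / 2) (d d' : ℕ) : 0 ≤ Pw N p d d' := by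
  unfold Pw
  split_ifs <;> linarith

lemma isBoundedUnder_ge_Ssum (hp0 : 0 ≤ p) (hp : p ≤ 1 / 2) {V : ℕ × ℕ → ℝ}
    (hV : ∀ d', d' ≠ 0 → Tendsto (fun Δ : ℕ => V (d', Δ)) atTop atTop) (d : ℕ) :
    IsBoundedUnder (· ≥ ·) atTop (fun Δ : ℕ => Ssum N p V d Δ) := by
  have hsum := isBoundedUnder_ge_sum (f := atTop) (Finset.range N)
    (u := fun d' (Δ : ℕ) => Pw N p d d' * V (d', if d' = 0 then 0 else Δ + d'))
  rw [Finset.sum_fn] at hsum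
  refine hsum fun d' _ => ?_
  rcases eq_or_ne d' 0 with rfl | hd'
  · simpa using isBoundedUnder_const
  · simp only [if_neg hd']
    refine isBoundedUnder_of_eventually_ge (a := 0) ?_
    filter_upwards [((hV d' hd').comp (tendsto_add_atTop_nat d')).eventually_ge_atTop 0]
      with Δ hΔ using mul_nonneg (Pw_nonneg hp0 hp d d') hΔ

lemma tendsto_Qit_atTop (hp0 : 0 ≤ p) (hp : p ≤ 1 / 2) (hps : ps ≤ 1) {V : ℕ × ℕ → ℝ}
    (hV : ∀ d', d' ≠ 0 → Tendsto (fun Δ : ℕ => V (d', Δ)) atTop atTop) (d : ℕ) :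
    Tendsto (fun Δ : ℕ => Qit N p ps lam V d Δ) atTop atTop := by
  obtain ⟨C, hC⟩ := (isBoundedUnder_ge_Ssum hp0 hp hV d).eventually_ge
  have hage : Tendsto (fun Δ : ℕ => (Δ : ℝ)) atTop atTop := tendsto_natCast_atTop_atTop
  have hidle : Tendsto (fun Δ : ℕ => Vact0 N p V d Δ) atTop atTop :=
    tendsto_atTop_add_right_of_le' _ C hage hC
  have htransmit : Tendsto (fun Δ : ℕ => Vact1 N p ps lam V d Δ) atTop atTop := by
    refine tendsto_atTop_add_right_of_le' _ ((1 - ps) * C)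
      (tendsto_atTop_add_const_right _ _ (tendsto_atTop_add_const_right _ _ hage)) ?_
    filter_upwards [hC] with Δ hΔ using mul_le_mul_of_nonneg_left hΔ (by linarith)
  exact tendsto_inf_atTop _ hidle htransmit

lemma tendsto_Vit_atTop (hp0 : 0 ≤ p) (hp : p ≤ 1 / 2) (hps : ps ≤ 1) (ν d : ℕ) :
    Tendsto (fun Δ : ℕ => Vit N p ps lam ν (d, Δ)) atTop atTop := by
  induction ν generalizing d with
  | zero => exact tendsto_natCast_atTop_atTop
  | succ ν ih =>
    exact tendsto_atTop_add_const_right _ _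
      (tendsto_Qit_atTop hp0 hp hps (fun d' _ => ih d') d)

end ValueIteration

theorem Vit_tendsto_atTop_in_age_general
    (N : ℕ) (p ps lam : ℝ)
    (hp0 : 0 ≤ p) (hp1 : p ≤ 1 / 3)
    (hps1 : ps ≤ 1)
    (ν d : ℕ) :
    Filter.Tendsto (fun Δ : ℕ => Vit N p ps lam ν (d, Δ))
      Filter.atTop Filter.atTop :=
  tendsto_Vit_atTop hp0 (by linarith) hps1 ν d

/-- for every iteration `ν ≥ 0` and every `d ∈ {0,…,N-1}`, the estimated
value function is unbounded in the age coordinate: `V_ν(d,Δ) → +∞` as `Δ → ∞`. -/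
theorem Vit_tendsto_atTop_in_age
    (N : ℕ) (p ps lam : ℝ)
    (hN : 2 ≤ N) (hp0 : 0 ≤ p) (hp1 : p ≤ 1 / 3)
    (hps0 : 0 < ps) (hps1 : ps ≤ 1) (hlam : 0 ≤ lam)
    (ν d : ℕ) (hd : d ≤ N - 1) :
    Filter.Tendsto (fun Δ : ℕ => Vit N p ps lam ν (d, Δ))
      Filter.atTop Filter.atTop :=
  Vit_tendsto_atTop_in_age_general N p ps lam hp0 hp1 hps1 ν d
end

section
/- (Expected AoII: the finite system.) Assume N ≥ 3. Let n = (n_1,…,n_{N−1}) be a threshold policy with τ = max_d n_d ≥ 2 and l_d = d(d+1)/2, and let π be a stationary distribution of the chain induced by n with finite mean age, i.e. Σ_{d=0}^{N−1} Σ_{Δ∈ℕ} Δ·π_d(Δ) < ∞. Define ω_d(Δ) = Δ·π_d(Δ), Ω_d = Σ_{Δ ≥ τ} ω_d(Δ), and Π_d = Σ_{Δ ≥ τ} π_d(Δ). Then the expected AoII Δ̄ = Σ_{d=0}^{N−1} Σ_{Δ∈ℕ} Δ·π_d(Δ) equals Σ_{d=1}^{N−1}(Σ_{Δ=l_d}^{τ−1}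 ω_d(Δ) + Ω_d), and for each 1 ≤ d ≤ N−1: Ω_d = Σ_{d′=1}^{N−1} P_{d′,d}·(Σ_{Δ=τ−d}^{τ−1}(1 − p_s·a(d′,Δ))·ω_{d′}(Δ) + p_f·Ω_{d′}) + d·Π_d. -/
/-- One-step transition kernel under action `a = 0` (idle):
`K₀((d,Δ),(d',Δ'(d'))) = P_{d,d'}` where `Δ'(d') = 0` if `d' = 0` and
`Δ'(d') = Δ + d'` otherwise. -/
noncomputable def K0 (N : ℕ) (p : ℝ) (x y : ℕ × ℕ) : ℝ :=
  if y.2 = (if y.1 = 0 then 0 else x.2 + y.1) then Pw N p x.1 y.1 else 0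

/-- One-step transition kernel under action `a = 1` (transmit):
`K₁((d,Δ),·) = p_s(1-2p)·δ_{(0,0)} + 2 p_s p·δ_{(1,1)} + p_f·K₀((d,Δ),·)`,
with `p_f = 1 - p_s`. -/
noncomputable def K1 (N : ℕ) (p ps : ℝ) (x y : ℕ × ℕ) : ℝ :=
  ps * (1 - 2 * p) * (if y = (0, 0) then 1 else 0)
    + 2 * ps * p * (if y = (1, 1) then 1 else 0)
    + (1 - ps) * K0 N p x y

/-- Kernel induced by a threshold policy `n = (n_1,…,n_{N-1})`: the policy takes
action `a(d,Δ) = 1` if `d ≥ 1` and `Δ ≥ n_d`, and `a(d,Δ) = 0` otherwise. -/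
noncomputable def Kpol (N : ℕ) (p ps : ℝ) (n : ℕ → ℕ) (x y : ℕ × ℕ) : ℝ :=
  if 1 ≤ x.1 ∧ n x.1 ≤ x.2 then K1 N p ps x y else K0 N p x y

/-- `IsStationaryPol N p ps n π`: `π` is a stationary distribution of the chain induced
by the threshold policy `n`: `π` takes values in `[0,1]`, is supported on states with
`d ≤ N-1`, sums to `1`, and satisfies `π(x) = Σ_{x'} K(x',x)·π(x')` for every `x`. -/
def IsStationaryPol (N : ℕ) (p ps : ℝ) (n : ℕ → ℕ) (π : ℕ × ℕ → ℝ) : Prop :=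
  (∀ x, 0 ≤ π x ∧ π x ≤ 1) ∧
  (∀ x : ℕ × ℕ, N ≤ x.1 → π x = 0) ∧
  HasSum π 1 ∧
  (∀ x : ℕ × ℕ, HasSum (fun x' => Kpol N p ps n x' x * π x') (π x))

/-- Real-valued action indicator of the threshold policy `n`:
`a(d,Δ) = 1` if `d ≥ 1` and `Δ ≥ n_d`, else `0`. -/
noncomputable def Aact (n : ℕ → ℕ) (d Δ : ℕ) : ℝ :=
  if 1 ≤ d ∧ n d ≤ Δ then 1 else 0

/-- `ω_d(Δ) = Δ·π_d(Δ)`. -/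
noncomputable def omg (π : ℕ × ℕ → ℝ) (d Δ : ℕ) : ℝ := (Δ : ℝ) * π (d, Δ)

/-- Tail mass `Π_d = Σ_{Δ ≥ τ} π_d(Δ)`. -/
noncomputable def Pid (π : ℕ × ℕ → ℝ) (τ d : ℕ) : ℝ := ∑' Δ : ℕ, π (d, Δ + τ)

/-- Tail mean `Ω_d = Σ_{Δ ≥ τ} ω_d(Δ)`. -/
noncomputable def Omg (π : ℕ × ℕ → ℝ) (τ d : ℕ) : ℝ := ∑' Δ : ℕ, omg π d (Δ + τ)

/-- The age lower bound `l_d = d(d+1)/2`. -/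
def lB (d : ℕ) : ℕ := d * (d + 1) / 2

/-! Outside the two reset states `(0, 0)` and `(1, 1)`, a state `(d, Δ)` with `d ≥ 1` can only be
entered from some `(d', Δ - d)` with `d' ≥ 1` through an unsuccessful (or absent) transmission, so
stationarity reads `π_d(Δ) = Σ_{d'} P_{d',d} (1 - p_s a(d', Δ - d)) π_{d'}(Δ - d)` for `Δ ≥ 2`.
Since `P_{d',d} = 0` unless `d' ≥ d - 1` and `l_d - d = l_{d-1}`, this recursion propagates
`π_d(Δ) = 0` from `Δ < d` to `Δ < l_d`, which gives the formula for the mean age. Multiplying the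
recursion by `Δ = (Δ - d) + d` and summing over `Δ ≥ τ` gives the equation for `Ω_d`: the sum over
`Δ - d ≥ τ - d` splits into the window `[τ - d, τ)` and the tail `Δ ≥ τ`, where every `d' ≥ 1`
transmits because `n_{d'} ≤ τ`. -/

open Finset

theorem summable_comp_add_sub {f : ℕ → ℝ} (hf : Summable f) (a b : ℕ) :
    Summable fun m => f (m + a - b) := by
  refine (summable_nat_add_iff b).mp ?_
  simpa only [Nat.add_right_comm _ b a, Nat.add_sub_cancel] using (summable_nat_add_iff a).mpr hf

theorem tsum_comp_add_sub {f : ℕ → ℝ} (hf : Summable f) (h0 : f 0 = 0) (τ d : ℕ) :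
    ∑' m, f (m + τ - d) = ∑ k ∈ Ico (τ - d) τ, f k + ∑' m, f (m + τ) := by
  have hshift : ∑' m, f (m + τ - d) = ∑' m, f (m + (τ - d)) := by
    rcases le_or_gt d τ with h | h
    · exact tsum_congr fun m => by rw [Nat.add_sub_assoc h]
    · rw [Nat.sub_eq_zero_of_le h.le, ← (summable_comp_add_sub hf τ d).sum_add_tsum_nat_add (d - τ),
        sum_eq_zero fun i hi => by
          rw [Nat.sub_eq_zero_of_le (by simp only [mem_range] at hi; omega), h0], zero_add]
      exact tsum_congr fun m => by congr 1; omega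
  rw [hshift, ← ((summable_nat_add_iff _).mpr hf).sum_add_tsum_nat_add (τ - (τ - d)),
    sum_Ico_eq_sum_range]
  congr 1
  · exact sum_congr rfl fun i _ => by rw [Nat.add_comm]
  · exact tsum_congr fun m => by congr 1; omega

theorem Summable.mul_left_of_abs_le {f c : ℕ → ℝ} (hf : Summable f) {C : ℝ} (hc : ∀ i, |c i| ≤ C) :
    Summable fun i => c i * f i :=
  (hf.abs.mul_left C).of_norm_bounded fun i => by
    rw [Real.norm_eq_abs, abs_mul]
    exact mul_le_mul_of_nonneg_right (hc i) (abs_nonneg _)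

theorem tsum_eq_sum_mul_tsum {ι : Type*} {s : Finset ι} {c : ι → ℝ} {F : ℕ → ℝ} {G : ι → ℕ → ℝ}
    (hG : ∀ i ∈ s, Summable (G i)) (hF : ∀ m, F m = ∑ i ∈ s, c i * G i m) :
    ∑' m, F m = ∑ i ∈ s, c i * ∑' m, G i m := by
  rw [tsum_congr hF, Summable.tsum_finsetSum fun i hi => (hG i hi).mul_left (c i)]
  simp_rw [tsum_mul_left]

theorem lB_succ (d : ℕ) : lB (d + 1) = lB d + (d + 1) := by
  have h : (d + 1) * (d + 1 + 1) = d * (d + 1) + (d + 1) * 2 := by ring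
  rw [lB, lB, h, Nat.add_mul_div_right _ _ two_pos]

theorem lB_mono : Monotone lB :=
  monotone_nat_of_le_succ fun d => by rw [lB_succ]; omega

theorem Pw_eq_zero_of_add_one_lt {N : ℕ} {p : ℝ} {d' d : ℕ} (h : d' + 1 < d) : Pw N p d' d = 0 := by
  unfold Pw
  split_ifs <;> first | rfl | omega

theorem Summable.one_sub_mul_Aact_mul {f : ℕ → ℝ} (hf : Summable f) (ps : ℝ) (n : ℕ → ℕ) (d : ℕ) :
    Summable fun Δ => (1 - ps * Aact n d Δ) * f Δ :=
  hf.mul_left_of_abs_le (C := 1 + |ps|) fun Δ => by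
    unfold Aact
    split_ifs
    · simpa using abs_sub (1 : ℝ) ps
    · simp

theorem tsum_one_sub_Aact_omg_comp_add_sub {ps : ℝ} {n : ℕ → ℕ} {π : ℕ × ℕ → ℝ} {τ d' : ℕ}
    (hω : Summable (omg π d')) (hd' : 0 < d') (hτ : n d' ≤ τ) (d : ℕ) :
    ∑' m, (1 - ps * Aact n d' (m + τ - d)) * omg π d' (m + τ - d)
      = ∑ Δ ∈ Ico (τ - d) τ, (1 - ps * Aact n d' Δ) * omg π d' Δ + (1 - ps) * Omg π τ d' := by
  rw [tsum_comp_add_sub (hω.one_sub_mul_Aact_mul ps n d') (by simp [omg]), Omg, ← tsum_mul_left]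
  congr 1
  exact tsum_congr fun m => by rw [Aact, if_pos ⟨by omega, hτ.trans (by omega)⟩, mul_one]

section Kernel

variable {N : ℕ} {p ps : ℝ} {n : ℕ → ℕ}

theorem Kpol_apply_of_pos_of_ne {d Δ : ℕ} (hd : 0 < d) (h11 : (d, Δ) ≠ (1, 1)) (x : ℕ × ℕ) :
    Kpol N p ps n x (d, Δ) =
      if Δ = x.2 + d then (1 - ps * Aact n x.1 x.2) * Pw N p x.1 d else 0 := by
  have h00 : (d, Δ) ≠ (0, 0) := by simp [hd.ne']
  unfold Kpol K1 K0 Aact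
  simp only [hd.ne', h00, h11, if_false]
  split_ifs <;> ring

theorem Kpol_zero_right {Δ : ℕ} (hΔ : Δ ≠ 0) (x : ℕ × ℕ) : Kpol N p ps n x (0, Δ) = 0 := by
  unfold Kpol K1 K0
  simp [hΔ]

end Kernel

namespace IsStationaryPol

variable {N : ℕ} {p ps : ℝ} {n : ℕ → ℕ} {π : ℕ × ℕ → ℝ} (hπ : IsStationaryPol N p ps n π)
include hπ

theorem summable_slice (d : ℕ) : Summable fun Δ => π (d, Δ) :=
  hπ.2.2.1.summable.comp_injective fun _ _ h => by simpa using h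

theorem eq_zero_of_forall_Kpol_eq_zero {y : ℕ × ℕ} (h : ∀ x, Kpol N p ps n x y = 0) : π y = 0 :=
  (hπ.2.2.2 y).unique (by simp [h])

theorem apply_zero_left {Δ : ℕ} (hΔ : Δ ≠ 0) : π (0, Δ) = 0 :=
  hπ.eq_zero_of_forall_Kpol_eq_zero (Kpol_zero_right hΔ)

theorem apply_of_lt {d Δ : ℕ} (h : Δ < d) : π (d, Δ) = 0 :=
  hπ.eq_zero_of_forall_Kpol_eq_zero fun x => by
    rw [Kpol_apply_of_pos_of_ne (by omega) (by simp only [ne_eq, Prod.mk.injEq]; omega),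
      if_neg (by omega)]

theorem apply_add_eq_sum {d m : ℕ} (hd : 0 < d) (h2 : 2 ≤ m + d) :
    π (d, m + d) = ∑ d' ∈ Icc 1 (N - 1), Pw N p d' d * ((1 - ps * Aact n d' m) * π (d', m)) := by
  have hK : ∀ x, Kpol N p ps n x (d, m + d) = _ :=
    Kpol_apply_of_pos_of_ne hd (by simp only [ne_eq, Prod.mk.injEq]; omega)
  have hvanish : ∀ x ∉ Icc 1 (N - 1) ×ˢ {m}, Kpol N p ps n x (d, m + d) * π x = 0 := by
    rintro ⟨d', k⟩ hx
    rw [hK]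
    by_cases hk : k = m
    · subst hk
      rcases Nat.eq_zero_or_pos d' with rfl | hd'
      · rcases Nat.eq_zero_or_pos k with rfl | hk
        · simp [Pw_eq_zero_of_add_one_lt (N := N) (p := p) (show 0 + 1 < d by omega)]
        · simp [hπ.apply_zero_left hk.ne']
      · simp only [mem_product, mem_Icc, mem_singleton, and_true] at hx
        rw [hπ.2.1 (d', k) (by omega), mul_zero]
    · rw [if_neg (by omega), zero_mul]
  rw [(hπ.2.2.2 (d, m + d)).unique (hasSum_sum_of_ne_finset_zero hvanish), sum_product]
  refine sum_congr rfl fun d' _ => ?_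
  rw [sum_singleton, hK, if_pos rfl]
  ring

theorem apply_eq_sum {d Δ : ℕ} (hd : 0 < d) (hΔ : 2 ≤ Δ) :
    π (d, Δ) = ∑ d' ∈ Icc 1 (N - 1),
      Pw N p d' d * ((1 - ps * Aact n d' (Δ - d)) * π (d', Δ - d)) := by
  rcases le_or_gt d Δ with h | h
  · obtain ⟨m, rfl⟩ := Nat.exists_eq_add_of_le' h
    rw [Nat.add_sub_cancel]
    exact hπ.apply_add_eq_sum hd hΔ
  · rw [hπ.apply_of_lt h, Nat.sub_eq_zero_of_le h.le]
    refine (sum_eq_zero fun d' hd' => ?_).symm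
    rw [hπ.apply_of_lt (mem_Icc.mp hd').1, mul_zero, mul_zero]

theorem apply_of_lt_lB {d Δ : ℕ} (hΔ : Δ < lB d) : π (d, Δ) = 0 := by
  induction Δ using Nat.strong_induction_on generalizing d with
  | _ Δ ih =>
  rcases lt_or_ge Δ d with h | h
  · exact hπ.apply_of_lt h
  obtain ⟨e, rfl⟩ : ∃ e, d = e + 1 := Nat.exists_eq_succ_of_ne_zero (by rintro rfl; simp [lB] at hΔ)
  have he : e ≠ 0 := by rintro rfl; simp [lB] at hΔ; omega
  rw [lB_succ] at hΔ
  rw [hπ.apply_eq_sum (by omega) (by omega)]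
  refine sum_eq_zero fun d' _ => ?_
  rcases lt_or_ge (d' + 1) (e + 1) with h' | h'
  · rw [Pw_eq_zero_of_add_one_lt h', zero_mul]
  · rw [ih _ (by omega) ((show Δ - (e + 1) < lB e by omega).trans_le (lB_mono (by omega))),
      mul_zero, mul_zero]

theorem omg_zero_left (Δ : ℕ) : omg π 0 Δ = 0 := by
  rcases Nat.eq_zero_or_pos Δ with rfl | hΔ
  · simp [omg]
  · rw [omg, hπ.apply_zero_left hΔ.ne', mul_zero]

theorem tsum_omg_eq {d : ℕ} (τ : ℕ) (hd : Summable (omg π d)) :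
    ∑' Δ, omg π d Δ = ∑ Δ ∈ Ico (lB d) τ, omg π d Δ + Omg π τ d := by
  rw [← hd.sum_add_tsum_nat_add τ, Omg, range_eq_Ico]
  congr 1
  refine (sum_subset (Ico_subset_Ico_left (Nat.zero_le _)) fun Δ hΔ hΔ' => ?_).symm
  rw [omg, hπ.apply_of_lt_lB (by simp only [mem_Ico] at hΔ hΔ'; omega), mul_zero]

theorem omg_eq_sum {d Δ : ℕ} (hd : 0 < d) (hΔ : 2 ≤ Δ) :
    omg π d Δ = ∑ d' ∈ Icc 1 (N - 1), Pw N p d' d *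
      ((1 - ps * Aact n d' (Δ - d)) * omg π d' (Δ - d)
        + d * ((1 - ps * Aact n d' (Δ - d)) * π (d', Δ - d))) := by
  rw [omg, hπ.apply_eq_sum hd hΔ, mul_sum]
  refine sum_congr rfl fun d' hd' => ?_
  have hsplit : (Δ : ℝ) * π (d', Δ - d) = omg π d' (Δ - d) + d * π (d', Δ - d) := by
    rcases le_or_gt d Δ with h | h
    · rw [omg, Nat.cast_sub h]; ring
    · rw [Nat.sub_eq_zero_of_le h.le, hπ.apply_of_lt (mem_Icc.mp hd').1]; simp [omg]
  linear_combination (Pw N p d' d * (1 - ps * Aact n d' (Δ - d))) * hsplit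

theorem Pid_eq_sum {τ d : ℕ} (hd : 0 < d) (hτ : 2 ≤ τ) :
    Pid π τ d = ∑ d' ∈ Icc 1 (N - 1),
      Pw N p d' d * ∑' m, (1 - ps * Aact n d' (m + τ - d)) * π (d', m + τ - d) :=
  tsum_eq_sum_mul_tsum
    (fun d' _ => summable_comp_add_sub ((hπ.summable_slice d').one_sub_mul_Aact_mul ps n d') τ d)
    fun _ => hπ.apply_eq_sum hd (by omega)

theorem Omg_eq_sum {τ d : ℕ} (hmean : ∀ d, Summable (omg π d)) (hd : 0 < d) (hτ : 2 ≤ τ) :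
    Omg π τ d = ∑ d' ∈ Icc 1 (N - 1), Pw N p d' d *
      (∑' m, (1 - ps * Aact n d' (m + τ - d)) * omg π d' (m + τ - d)
        + d * ∑' m, (1 - ps * Aact n d' (m + τ - d)) * π (d', m + τ - d)) := by
  have hω (d') := summable_comp_add_sub ((hmean d').one_sub_mul_Aact_mul ps n d') τ d
  have hπ' (d') := summable_comp_add_sub ((hπ.summable_slice d').one_sub_mul_Aact_mul ps n d') τ d
  rw [Omg, tsum_eq_sum_mul_tsum (fun d' _ => (hω d').add ((hπ' d').mul_left (d : ℝ)))
    fun _ => hπ.omg_eq_sum hd (by omega)]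
  refine sum_congr rfl fun d' _ => ?_
  rw [(hω d').tsum_add ((hπ' d').mul_left _), tsum_mul_left]

theorem sum_range_tsum_omg (hmean : ∀ d, Summable (omg π d)) (τ : ℕ) :
    ∑ d ∈ range N, ∑' Δ, omg π d Δ
      = ∑ d ∈ Icc 1 (N - 1), (∑ Δ ∈ Ico (lB d) τ, omg π d Δ + Omg π τ d) := by
  rw [← sum_congr rfl fun d _ => hπ.tsum_omg_eq τ (hmean d)]
  have hsub : Icc 1 (N - 1) ⊆ range N := fun d hd => by
    simp only [mem_Icc, mem_range] at hd ⊢; omega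
  refine (sum_subset hsub fun d hd hd' => ?_).symm
  obtain rfl : d = 0 := by simp only [mem_Icc, mem_range] at hd hd'; omega
  simp [hπ.omg_zero_left]

end IsStationaryPol

theorem expected_AoII_finite_system_general
    (N : ℕ) (p ps : ℝ)
    (n : ℕ → ℕ)
    (τ : ℕ) (hτub : ∀ d ∈ Finset.Icc 1 (N - 1), n d ≤ τ)
    (hτ2 : 2 ≤ τ)
    (π : ℕ × ℕ → ℝ) (hπ : IsStationaryPol N p ps n π)
    (hmean : ∀ d : ℕ, Summable (fun Δ : ℕ => (Δ : ℝ) * π (d, Δ))) :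
    (∑ d ∈ Finset.range N, ∑' Δ : ℕ, (Δ : ℝ) * π (d, Δ))
      = ∑ d ∈ Finset.Icc 1 (N - 1),
          ((∑ Δ ∈ Finset.Ico (lB d) τ, omg π d Δ) + Omg π τ d) ∧
    (∀ d ∈ Finset.Icc 1 (N - 1),
      Omg π τ d = (∑ d' ∈ Finset.Icc 1 (N - 1),
        Pw N p d' d *
          ((∑ Δ ∈ Finset.Ico (τ - d) τ, (1 - ps * Aact n d' Δ) * omg π d' Δ)
            + (1 - ps) * Omg π τ d')) + (d : ℝ) * Pid π τ d) := by
  refine ⟨hπ.sum_range_tsum_omg hmean τ, fun d hd => ?_⟩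
  rw [hπ.Omg_eq_sum hmean (mem_Icc.mp hd).1 hτ2, hπ.Pid_eq_sum (mem_Icc.mp hd).1 hτ2,
    mul_sum, ← sum_add_distrib]
  refine sum_congr rfl fun d' hd' => ?_
  rw [tsum_one_sub_Aact_omg_comp_add_sub (hmean d') (mem_Icc.mp hd').1 (hτub d' hd')]
  ring

/-- expected AoII: the finite system: for a threshold policy `n` with
`τ = max_d n_d ≥ 2` and a stationary distribution `π` with finite mean age, the
expected AoII `Δ̄ = Σ_{d=0}^{N-1} Σ_Δ Δ·π_d(Δ)` equals
`Σ_{d=1}^{N-1} (Σ_{Δ=l_d}^{τ-1} ω_d(Δ) + Ω_d)`, and the `Ω_d` satisfy the stated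
finite balance system. -/
theorem expected_AoII_finite_system
    (N : ℕ) (p ps : ℝ)
    (hN : 3 ≤ N) (hp0 : 0 ≤ p) (hp1 : p ≤ 1 / 3)
    (hps0 : 0 < ps) (hps1 : ps ≤ 1)
    (n : ℕ → ℕ) (hn : ∀ d, 1 ≤ d → d ≤ N - 1 → 1 ≤ n d)
    (τ : ℕ) (hτub : ∀ d ∈ Finset.Icc 1 (N - 1), n d ≤ τ)
    (hτmem : ∃ d ∈ Finset.Icc 1 (N - 1), n d = τ) (hτ2 : 2 ≤ τ)
    (π : ℕ × ℕ → ℝ) (hπ : IsStationaryPol N p ps n π)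
    (hmean : ∀ d : ℕ, Summable (fun Δ : ℕ => (Δ : ℝ) * π (d, Δ))) :
    (∑ d ∈ Finset.range N, ∑' Δ : ℕ, (Δ : ℝ) * π (d, Δ))
      = ∑ d ∈ Finset.Icc 1 (N - 1),
          ((∑ Δ ∈ Finset.Ico (lB d) τ, omg π d Δ) + Omg π τ d) ∧
    (∀ d ∈ Finset.Icc 1 (N - 1),
      Omg π τ d = (∑ d' ∈ Finset.Icc 1 (N - 1),
        Pw N p d' d *
          ((∑ Δ ∈ Finset.Ico (τ - d) τ, (1 - ps * Aact n d' Δ) * omg π d' Δ)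
            + (1 - ps) * Omg π τ d')) + (d : ℝ) * Pid π τ d) :=
  expected_AoII_finite_system_general N p ps n τ hτub hτ2 π hπ hmean
end
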